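/- arXiv:0706.2642 — 8 statements merged into one kernel-verified Lean document; each statement's English description precedes it below -/
import Mathlib

section
/- For f n-times continuously differentiable on [0,∞) with f and all derivatives up to order n of polynomial growth, and s ≥ n, we have M(f^{(n)})(s) = Σ_{i=0}^n (−1)^i C(n,i) Mf(s−i). -/
open MeasureTheory Set Real

noncomputable def twistedMellin (f : ℝ → ℝ) (s : ℝ) : ℝ :=
  (∫ x in Set.Ioi (0:ℝ), f x * x ^ s * Real.exp (-x)) / Real.Gamma (s + 1)

/-!
Integrating by parts against `x ^ s * exp (-x)`, whose derivative is
`s * x ^ (s - 1) * exp (-x) - x ^ s * exp (-x)`, and using `Γ (s + 1) = s * Γ s`, gives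
`M g' s = M g s - M g (s - 1)` for `0 < s`: the boundary term vanishes at `0` because
`0 < s` and at `∞` because `exp (-x)` beats polynomial growth. Hence `M (f⁽ⁿ⁾)` is the `n`-th
backward difference `(-1) ^ n * Δ_[-1]^[n] (M f)`, whose binomial expansion
(`fwdDiff_iter_eq_sum_shift`) is the claimed sum.
-/

open Filter Topology

section PolynomialGrowth

variable {g : ℝ → ℝ} {C : ℝ} {N : ℕ}

lemma abs_mul_rpow_mul_exp_neg_le (hb : ∀ x > 0, |g x| ≤ C * x ^ N) {x : ℝ} (hx : 0 < x)
    (s : ℝ) : |g x * x ^ s * exp (-x)| ≤ C * (x ^ ((N : ℝ) + s) * exp (-x)) := by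
  rw [abs_mul, abs_mul, abs_of_pos (rpow_pos_of_pos hx s), abs_of_pos (exp_pos _),
    rpow_add hx, rpow_natCast]
  calc |g x| * x ^ s * exp (-x) ≤ C * x ^ N * x ^ s * exp (-x) := by gcongr; exact hb x hx
    _ = C * (x ^ N * x ^ s * exp (-x)) := by ring

lemma integrableOn_mul_rpow_mul_exp_neg (hg : ContinuousOn g (Ioi 0))
    (hb : ∀ x > 0, |g x| ≤ C * x ^ N) {s : ℝ} (hs : -1 < s) :
    IntegrableOn (fun x => g x * x ^ s * exp (-x)) (Ioi 0) := by
  have hmaj : IntegrableOn (fun x => C * (x ^ ((N : ℝ) + s) * exp (-x))) (Ioi 0) := by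
    have hpos : 0 < (N : ℝ) + s + 1 := by linarith [N.cast_nonneg (α := ℝ)]
    refine IntegrableOn.congr_fun ((GammaIntegral_convergent hpos).const_mul C) (fun x _ => ?_)
      measurableSet_Ioi
    rw [add_sub_cancel_right, mul_comm (exp _)]
  refine hmaj.mono' ?_ ?_
  · exact ((hg.mul (continuousOn_id.rpow_const fun x hx => Or.inl (ne_of_gt hx))).mul
      (continuous_exp.comp continuous_neg).continuousOn).aestronglyMeasurable measurableSet_Ioi
  · filter_upwards [ae_restrict_mem measurableSet_Ioi] with x hx
    exact abs_mul_rpow_mul_exp_neg_le hb hx s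

lemma tendsto_mul_rpow_mul_exp_neg_atTop (hb : ∀ x > 0, |g x| ≤ C * x ^ N) (s : ℝ) :
    Tendsto (fun x => g x * x ^ s * exp (-x)) atTop (𝓝 0) := by
  have hlim := (tendsto_rpow_mul_exp_neg_mul_atTop_nhds_zero ((N : ℝ) + s) 1 one_pos).const_mul C
  simp only [neg_mul, one_mul, mul_zero] at hlim
  refine squeeze_zero_norm' ?_ hlim
  filter_upwards [eventually_gt_atTop 0] with x hx
  exact abs_mul_rpow_mul_exp_neg_le hb hx s

end PolynomialGrowth

section IntegrationByParts

variable {g g' : ℝ → ℝ} {C : ℝ} {N : ℕ}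

lemma integral_deriv_mul_rpow_mul_exp_neg (hg : ContinuousOn g (Ici 0))
    (hderiv : ∀ x > 0, HasDerivAt g (g' x) x) (hg' : ContinuousOn g' (Ioi 0))
    (hb : ∀ x > 0, |g x| ≤ C * x ^ N) (hb' : ∀ x > 0, |g' x| ≤ C * x ^ N)
    {s : ℝ} (hs : 0 < s) :
    ∫ x in Ioi 0, g' x * x ^ s * exp (-x) =
      (∫ x in Ioi 0, g x * x ^ s * exp (-x)) -
        s * ∫ x in Ioi 0, g x * x ^ (s - 1) * exp (-x) := by
  have hgIoi := hg.mono Ioi_subset_Ici_self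
  have hI' := integrableOn_mul_rpow_mul_exp_neg hg' hb' (s := s) (by linarith)
  have hI := integrableOn_mul_rpow_mul_exp_neg hgIoi hb (s := s) (by linarith)
  have hI₁ := (integrableOn_mul_rpow_mul_exp_neg hgIoi hb (s := s - 1) (by linarith)).const_mul s
  have hderivF : ∀ x ∈ Ioi (0 : ℝ), HasDerivAt (fun x => g x * x ^ s * exp (-x))
      (g' x * x ^ s * exp (-x) + s * (g x * x ^ (s - 1) * exp (-x)) - g x * x ^ s * exp (-x)) x :=
    fun x hx => (((hderiv x hx).mul (hasDerivAt_rpow_const (Or.inl (ne_of_gt hx)))).mul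
      (hasDerivAt_neg x).exp).congr_deriv (by simp only [Pi.mul_apply]; ring)
  have hcont : ContinuousWithinAt (fun x => g x * x ^ s * exp (-x)) (Ici 0) 0 :=
    ((hg 0 self_mem_Ici).mul (continuousAt_rpow_const 0 s (Or.inr hs.le)).continuousWithinAt).mul
      (continuous_exp.comp continuous_neg).continuousWithinAt
  have hI'₁ : IntegrableOn
      (fun x => g' x * x ^ s * exp (-x) + s * (g x * x ^ (s - 1) * exp (-x))) (Ioi 0) :=
    hI'.add hI₁
  have h := integral_Ioi_of_hasDerivAt_of_tendsto hcont hderivF (hI'₁.sub hI)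
    (tendsto_mul_rpow_mul_exp_neg_atTop hb s)
  rw [integral_sub hI'₁ hI, integral_add hI' hI₁, integral_const_mul] at h
  simp only [zero_rpow hs.ne', mul_zero, zero_mul, sub_zero] at h
  linarith

lemma twistedMellin_deriv (hg : ContinuousOn g (Ici 0))
    (hderiv : ∀ x > 0, HasDerivAt g (g' x) x) (hg' : ContinuousOn g' (Ioi 0))
    (hb : ∀ x > 0, |g x| ≤ C * x ^ N) (hb' : ∀ x > 0, |g' x| ≤ C * x ^ N)
    {s : ℝ} (hs : 0 < s) :
    twistedMellin g' s = twistedMellin g s - twistedMellin g (s - 1) := by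
  have hΓ := (Gamma_pos_of_pos hs).ne'
  rw [twistedMellin, twistedMellin, twistedMellin,
    integral_deriv_mul_rpow_mul_exp_neg hg hderiv hg' hb hb' hs, sub_add_cancel,
    Gamma_add_one hs.ne']
  field_simp

end IntegrationByParts

lemma hasDerivAt_iteratedDerivWithin_Ici {f : ℝ → ℝ} {a x : ℝ} {n : ℕ}
    (hf : ContDiffOn ℝ (n + 1) f (Ici a)) (hx : a < x) :
    HasDerivAt (iteratedDerivWithin n f (Ici a)) (iteratedDerivWithin (n + 1) f (Ici a) x) x := by
  rw [iteratedDerivWithin_succ]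
  exact ((hf.differentiableOn_iteratedDerivWithin (by exact_mod_cast n.lt_succ_self)
    (uniqueDiffOn_Ici a) x hx.le).hasDerivWithinAt).hasDerivAt (Ici_mem_nhds hx)

lemma twistedMellin_iteratedDerivWithin {f : ℝ → ℝ} {n : ℕ} (hf : ContDiffOn ℝ n f (Ici 0))
    {C : ℝ} {N : ℕ}
    (hbd : ∀ k ≤ n, ∀ x ≥ (0 : ℝ), |iteratedDerivWithin k f (Ici 0) x| ≤ C * x ^ N)
    {s : ℝ} (hs : n ≤ s) :
    twistedMellin (iteratedDerivWithin n f (Ici 0)) s =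
      (-1) ^ n * (fwdDiff (-1))^[n] (twistedMellin f) s := by
  induction n generalizing s with
  | zero => simp
  | succ n ih =>
    push_cast at hs
    have hbd' (k : ℕ) (hk : k ≤ n + 1) (x : ℝ) (hx : x > 0) := hbd k hk x hx.le
    have hstep := twistedMellin_deriv
      (hf.continuousOn_iteratedDerivWithin (by exact_mod_cast n.le_succ) (uniqueDiffOn_Ici 0))
      (fun x hx => hasDerivAt_iteratedDerivWithin_Ici (by exact_mod_cast hf) hx)
      ((hf.continuousOn_iteratedDerivWithin le_rfl (uniqueDiffOn_Ici 0)).mono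
        Ioi_subset_Ici_self)
      (hbd' n n.le_succ) (hbd' (n + 1) le_rfl) (s := s) (by linarith)
    have ih' (t : ℝ) (ht : n ≤ t) := ih (hf.of_le (by exact_mod_cast n.le_succ))
      (fun k hk => hbd k (hk.trans n.le_succ)) ht
    rw [hstep, ih' s (by linarith), ih' (s - 1) (by linarith), Function.iterate_succ_apply',
      fwdDiff, ← sub_eq_add_neg]
    ring

lemma neg_one_pow_mul_fwdDiff_iter_neg_one (G : ℝ → ℝ) (n : ℕ) (s : ℝ) :
    (-1) ^ n * (fwdDiff (-1))^[n] G s =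
      ∑ i ∈ Finset.range (n + 1), (-1 : ℝ) ^ i * (n.choose i) * G (s - i) := by
  rw [fwdDiff_iter_eq_sum_shift, Finset.mul_sum]
  refine Finset.sum_congr rfl fun i hi => ?_
  have hin : i ≤ n := Nat.lt_succ_iff.mp (Finset.mem_range.mp hi)
  have hsq : ((-1 : ℝ) ^ (n - i)) * (-1) ^ (n - i) = 1 := by rw [← mul_pow]; norm_num
  rw [zsmul_eq_mul, nsmul_eq_mul, ← pow_mul_pow_sub (-1 : ℝ) hin]
  push_cast
  rw [mul_neg_one, ← sub_eq_add_neg]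
  linear_combination ((-1 : ℝ) ^ i * n.choose i * G (s - i)) * hsq

theorem stmt3 (f : ℝ → ℝ) (n : ℕ)
    (hf : ContDiffOn ℝ n f (Set.Ici 0))
    (C : ℝ) (N : ℕ)
    (hbd : ∀ k ≤ n, ∀ x ≥ (0:ℝ), |iteratedDerivWithin k f (Set.Ici 0) x| ≤ C * x ^ N)
    (s : ℝ) (hs : (n : ℝ) ≤ s) :
    twistedMellin (iteratedDerivWithin n f (Set.Ici 0)) s =
      ∑ i ∈ Finset.range (n + 1),
        (-1 : ℝ) ^ i * (n.choose i) * twistedMellin f (s - i) := by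
  rw [twistedMellin_iteratedDerivWithin hf hbd hs, neg_one_pow_mul_fwdDiff_iter_neg_one]
end

section
/- For a continuous function f of polynomial growth, a natural number n, and g(x) = ∫₀^x f(t) dt, we have Mg(n) = Σ_{i=0}^n Mf(i). -/
open MeasureTheory Set Real

/-!
Write `g x = ∫₀ˣ f`. Integrating `(g x xⁿ e⁻ˣ)' = f x xⁿ e⁻ˣ + n g x xⁿ⁻¹ e⁻ˣ - g x xⁿ e⁻ˣ`
over `(0, ∞)`, where the boundary terms vanish because `g` grows polynomially and `g 0 = 0`,
gives `∫ g xⁿ e⁻ˣ = ∫ f xⁿ e⁻ˣ + n ∫ g xⁿ⁻¹ e⁻ˣ`. Dividing by `n! = Γ(n + 1)` this reads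
`Mg(0) = Mf(0)` and `Mg(n + 1) = Mf(n + 1) + Mg(n)`, and the formula follows by induction.
-/

open Filter Topology

lemma twistedMellin_natCast (h : ℝ → ℝ) (n : ℕ) :
    twistedMellin h n = (∫ x in Ioi (0:ℝ), h x * x ^ n * exp (-x)) / n.factorial := by
  simp only [twistedMellin, rpow_natCast, Gamma_nat_eq_factorial]

section PolynomialGrowth

variable {h : ℝ → ℝ} {C : ℝ} {N : ℕ}

lemma abs_mul_pow_mul_exp_neg_le {x : ℝ} (hx : 0 ≤ x) (hhx : |h x| ≤ C * x ^ N) (m : ℕ) :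
    |h x * x ^ m * exp (-x)| ≤ C * (x ^ (N + m) * exp (-x)) := by
  rw [abs_mul, abs_mul, abs_of_nonneg (pow_nonneg hx m), abs_of_pos (exp_pos _)]
  calc |h x| * x ^ m * exp (-x) ≤ C * x ^ N * x ^ m * exp (-x) := by gcongr
    _ = C * (x ^ (N + m) * exp (-x)) := by ring

lemma integrableOn_mul_pow_mul_exp_neg (hc : ContinuousOn h (Ioi 0))
    (hb : ∀ x > 0, |h x| ≤ C * x ^ N) (m : ℕ) :
    IntegrableOn (fun x => h x * x ^ m * exp (-x)) (Ioi 0) := by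
  have hmajorant : IntegrableOn (fun x => C * (x ^ (N + m) * exp (-x))) (Ioi 0) := by
    refine Integrable.const_mul ?_ C
    refine (GammaIntegral_convergent (s := (N + m + 1 : ℕ)) (by positivity)).congr_fun
      (fun x _ => ?_) measurableSet_Ioi
    have hs : ((N + m + 1 : ℕ) : ℝ) - 1 = (N + m : ℕ) := by push_cast; ring
    simp only [hs, rpow_natCast]
    ring
  refine hmajorant.integrable.mono' ?_ ?_
  · exact ((hc.mul (continuousOn_pow m)).mul
      (continuous_exp.comp continuous_neg).continuousOn).aestronglyMeasurable measurableSet_Ioi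
  · filter_upwards [ae_restrict_mem measurableSet_Ioi] with x hx
    exact abs_mul_pow_mul_exp_neg_le (le_of_lt hx) (hb x hx) m

lemma tendsto_mul_pow_mul_exp_neg_atTop (hb : ∀ x ≥ 0, |h x| ≤ C * x ^ N) (m : ℕ) :
    Tendsto (fun x => h x * x ^ m * exp (-x)) atTop (𝓝 0) := by
  have hmajorant : Tendsto (fun x => C * (x ^ (N + m) * exp (-x))) atTop (𝓝 0) := by
    simpa using (tendsto_pow_mul_exp_neg_atTop_nhds_zero (N + m)).const_mul C
  refine squeeze_zero_norm' ?_ hmajorant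
  filter_upwards [eventually_ge_atTop 0] with x hx
  exact abs_mul_pow_mul_exp_neg_le hx (hb x hx) m

/-- The bound `C xᴺ⁺¹` forces `h 0 = 0`, so the product vanishes at `0` as well. -/
lemma continuousWithinAt_mul_pow_mul_exp_neg_zero (hb : ∀ x ≥ 0, |h x| ≤ C * x ^ (N + 1))
    (m : ℕ) : ContinuousWithinAt (fun x => h x * x ^ m * exp (-x)) (Ici 0) 0 := by
  set F := fun x => h x * x ^ m * exp (-x)
  set G := fun x : ℝ => C * (x ^ (N + 1 + m) * exp (-x))
  have hFG : ∀ x ≥ 0, ‖F x‖ ≤ G x := fun x hx => abs_mul_pow_mul_exp_neg_le hx (hb x hx) m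
  have hG : Tendsto G (𝓝[Ici 0] 0) (𝓝 0) := by
    simpa [G] using ((Continuous.tendsto (f := G) (by fun_prop) 0).mono_left
      nhdsWithin_le_nhds)
  have hF0 : F 0 = 0 := norm_le_zero_iff.mp (by simpa [G] using hFG 0 le_rfl)
  rw [ContinuousWithinAt, hF0]
  exact squeeze_zero_norm' (eventually_nhdsWithin_of_forall hFG) hG

end PolynomialGrowth

section Primitive

variable {f : ℝ → ℝ}

lemma hasDerivAt_integral_of_continuousOn_Ici (hf : ContinuousOn f (Ici 0)) {x : ℝ}
    (hx : 0 < x) : HasDerivAt (fun x => ∫ t in (0:ℝ)..x, f t) (f x) x := by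
  have hf' : ContinuousOn f (Ioi 0) := hf.mono Ioi_subset_Ici_self
  refine intervalIntegral.integral_hasDerivAt_right ?_
    (hf'.stronglyMeasurableAtFilter isOpen_Ioi x hx) (hf'.continuousAt (Ioi_mem_nhds hx))
  exact (hf.mono (by simp [uIcc_of_le hx.le, Icc_subset_Ici_self])).intervalIntegrable

lemma abs_integral_le_of_abs_le_pow {C : ℝ} {N : ℕ} (hb : ∀ x ≥ 0, |f x| ≤ C * x ^ N)
    {x : ℝ} (hx : 0 ≤ x) : |∫ t in (0:ℝ)..x, f t| ≤ C / (N + 1) * x ^ (N + 1) := by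
  rw [← norm_eq_abs]
  calc ‖∫ t in (0:ℝ)..x, f t‖ ≤ ∫ t in (0:ℝ)..x, C * t ^ N :=
        intervalIntegral.norm_integral_le_of_norm_le hx
          (Eventually.of_forall fun t ht => hb t ht.1.le)
          ((by fun_prop : Continuous fun t : ℝ => C * t ^ N).intervalIntegrable _ _)
    _ = C / (N + 1) * x ^ (N + 1) := by
        rw [intervalIntegral.integral_const_mul, integral_pow]
        ring

variable {C : ℝ} {N : ℕ}

lemma integral_primitive_mul_pow_mul_exp_neg
    (hf : ContinuousOn f (Ici 0)) (hb : ∀ x ≥ 0, |f x| ≤ C * x ^ N) (n : ℕ) :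
    ∫ x in Ioi (0:ℝ), (∫ t in (0:ℝ)..x, f t) * x ^ n * exp (-x) =
      (∫ x in Ioi (0:ℝ), f x * x ^ n * exp (-x)) +
        n * ∫ x in Ioi (0:ℝ), (∫ t in (0:ℝ)..x, f t) * x ^ (n - 1) * exp (-x) := by
  set g := fun x => ∫ t in (0:ℝ)..x, f t
  have hg' : ∀ x ∈ Ioi (0:ℝ), HasDerivAt g (f x) x :=
    fun x hx => hasDerivAt_integral_of_continuousOn_Ici hf hx
  have hgc : ContinuousOn g (Ioi 0) := fun x hx => (hg' x hx).continuousAt.continuousWithinAt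
  have hgb : ∀ x ≥ 0, |g x| ≤ C / (N + 1) * x ^ (N + 1) :=
    fun x hx => abs_integral_le_of_abs_le_pow hb hx
  have If := integrableOn_mul_pow_mul_exp_neg (hf.mono Ioi_subset_Ici_self)
    (fun x hx => hb x hx.le) n
  have Ig := integrableOn_mul_pow_mul_exp_neg hgc (fun x hx => hgb x hx.le) n
  have Ig' := (integrableOn_mul_pow_mul_exp_neg hgc (fun x hx => hgb x hx.le) (n - 1)).const_mul
    (n : ℝ)
  have Iadd : IntegrableOn
      (fun x => f x * x ^ n * exp (-x) + n * (g x * x ^ (n - 1) * exp (-x))) (Ioi 0) :=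
    If.add Ig'
  have hderiv : ∀ x ∈ Ioi (0:ℝ), HasDerivAt (fun x => g x * x ^ n * exp (-x))
      (f x * x ^ n * exp (-x) + n * (g x * x ^ (n - 1) * exp (-x)) - g x * x ^ n * exp (-x))
      x := by
    intro x hx
    have hexp : HasDerivAt (fun y => exp (-y)) (-exp (-x)) x := by
      simpa using (hasDerivAt_neg x).exp
    have hpow : HasDerivAt (fun y : ℝ => y ^ n) (n * x ^ (n - 1)) x := hasDerivAt_pow n x
    exact (((hg' x hx).fun_mul hpow).fun_mul hexp).congr_deriv (by ring)
  have hFTC := integral_Ioi_of_hasDerivAt_of_tendsto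
    (continuousWithinAt_mul_pow_mul_exp_neg_zero hgb n) hderiv (Iadd.sub Ig)
    (tendsto_mul_pow_mul_exp_neg_atTop hgb n)
  rw [integral_sub Iadd Ig, integral_add If Ig', integral_const_mul] at hFTC
  simp only [g, intervalIntegral.integral_same, zero_mul, sub_zero] at hFTC
  linarith

lemma twistedMellin_primitive_zero
    (hf : ContinuousOn f (Ici 0)) (hb : ∀ x ≥ 0, |f x| ≤ C * x ^ N) :
    twistedMellin (fun x => ∫ t in (0:ℝ)..x, f t) (0 : ℕ) = twistedMellin f (0 : ℕ) := by
  rw [twistedMellin_natCast, twistedMellin_natCast,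
    integral_primitive_mul_pow_mul_exp_neg hf hb 0, Nat.cast_zero, zero_mul, add_zero]

lemma twistedMellin_primitive_succ
    (hf : ContinuousOn f (Ici 0)) (hb : ∀ x ≥ 0, |f x| ≤ C * x ^ N) (n : ℕ) :
    twistedMellin (fun x => ∫ t in (0:ℝ)..x, f t) (n + 1 : ℕ) =
      twistedMellin f (n + 1 : ℕ) + twistedMellin (fun x => ∫ t in (0:ℝ)..x, f t) n := by
  simp only [twistedMellin_natCast, integral_primitive_mul_pow_mul_exp_neg hf hb (n + 1),
    Nat.add_sub_cancel, Nat.factorial_succ]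
  field_simp
  push_cast
  ring

end Primitive

theorem stmt5 (f : ℝ → ℝ) (hf : ContinuousOn f (Set.Ici 0))
    (C : ℝ) (N : ℕ) (hbd : ∀ x ≥ (0:ℝ), |f x| ≤ C * x ^ N)
    (n : ℕ) :
    twistedMellin (fun x => ∫ t in (0:ℝ)..x, f t) n =
      ∑ i ∈ Finset.range (n + 1), twistedMellin f i := by
  induction n with
  | zero => simpa using twistedMellin_primitive_zero hf hbd
  | succ n ih =>
    rw [twistedMellin_primitive_succ hf hbd, ih, Finset.sum_range_succ _ (n + 1), add_comm]
end

section
/- If f is continuous on [0,∞) and |f(x)| ≤ C x^N for a natural number N and all x ≥ 0, then there is a constant C' such that |Mf(s)| ≤ C' (1+s)^N for all s ≥ 0. -/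
open MeasureTheory Set Real

/-!
The bound `|f x| ≤ C x^a` dominates the numerator of `Mf(s)` by the Gamma integral
`C Γ(s + a + 1)`, and for `a = N` the functional equation gives
`Γ(s + N + 1) = (s + 1) ⋯ (s + N) Γ(s + 1) ≤ N! (1 + s)^N Γ(s + 1)`.
-/

lemma Gamma_add_nat_add_one_le_factorial_mul {s : ℝ} (hs : 0 ≤ s) (N : ℕ) :
    Gamma (s + N + 1) ≤ N.factorial * (1 + s) ^ N * Gamma (s + 1) := by
  induction N with
  | zero => simp
  | succ N ih =>
    have hfactor : s + N + 1 ≤ (N + 1) * (1 + s) := by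
      nlinarith [Nat.cast_nonneg (α := ℝ) N]
    calc Gamma (s + ↑(N + 1) + 1) = (s + N + 1) * Gamma (s + N + 1) := by
          rw [← Gamma_add_one (by positivity)]; push_cast; ring_nf
      _ ≤ ((N + 1) * (1 + s)) * (N.factorial * (1 + s) ^ N * Gamma (s + 1)) :=
          mul_le_mul hfactor ih (Gamma_pos_of_pos (by positivity)).le (by positivity)
      _ = (N + 1).factorial * (1 + s) ^ (N + 1) * Gamma (s + 1) := by
          rw [Nat.factorial_succ]; push_cast; ring

lemma abs_integral_mul_rpow_mul_exp_le_mul_Gamma {f : ℝ → ℝ} {C a s : ℝ}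
    (hbd : ∀ x > 0, |f x| ≤ C * x ^ a) (has : 0 < s + a + 1) :
    |∫ x in Ioi (0:ℝ), f x * x ^ s * exp (-x)| ≤ C * Gamma (s + a + 1) := by
  have hdom : IntegrableOn (fun x ↦ C * (exp (-x) * x ^ (s + a + 1 - 1))) (Ioi 0) :=
    (GammaIntegral_convergent has).const_mul C
  have hpointwise : ∀ x ∈ Ioi (0:ℝ),
      ‖f x * x ^ s * exp (-x)‖ ≤ C * (exp (-x) * x ^ (s + a + 1 - 1)) := by
    intro x (hx : 0 < x)
    rw [Real.norm_eq_abs, abs_mul, abs_mul, abs_of_nonneg (rpow_nonneg hx.le s),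
      abs_of_pos (exp_pos _), add_sub_cancel_right, rpow_add hx]
    calc |f x| * x ^ s * exp (-x) ≤ C * x ^ a * x ^ s * exp (-x) := by
          gcongr; exact hbd x hx
      _ = C * (exp (-x) * (x ^ s * x ^ a)) := by ring
  calc |∫ x in Ioi (0:ℝ), f x * x ^ s * exp (-x)|
      ≤ ∫ x in Ioi (0:ℝ), C * (exp (-x) * x ^ (s + a + 1 - 1)) :=
        norm_integral_le_of_norm_le hdom ((ae_restrict_iff' measurableSet_Ioi).2
          (ae_of_all _ hpointwise))
    _ = C * Gamma (s + a + 1) := by rw [integral_const_mul, Gamma_eq_integral has]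

theorem stmt6_general (f : ℝ → ℝ)
    (C : ℝ) (N : ℕ) (hbd : ∀ x ≥ (0:ℝ), |f x| ≤ C * x ^ N) :
    ∃ C' : ℝ, ∀ s ≥ (0:ℝ), |twistedMellin f s| ≤ C' * (1 + s) ^ N := by
  have hC : 0 ≤ C := by simpa using (abs_nonneg _).trans (hbd 1 zero_le_one)
  refine ⟨C * N.factorial, fun s hs ↦ ?_⟩
  have hGamma : 0 < Gamma (s + 1) := Gamma_pos_of_pos (by linarith)
  have hnumerator : |∫ x in Ioi (0:ℝ), f x * x ^ s * exp (-x)| ≤ C * Gamma (s + N + 1) :=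
    abs_integral_mul_rpow_mul_exp_le_mul_Gamma
      (fun x hx ↦ by simpa only [rpow_natCast] using hbd x hx.le) (by positivity)
  rw [twistedMellin, abs_div, abs_of_pos hGamma, div_le_iff₀ hGamma]
  calc _ ≤ C * Gamma (s + N + 1) := hnumerator
    _ ≤ C * (N.factorial * (1 + s) ^ N * Gamma (s + 1)) :=
        mul_le_mul_of_nonneg_left (Gamma_add_nat_add_one_le_factorial_mul hs N) hC
    _ = C * N.factorial * (1 + s) ^ N * Gamma (s + 1) := by ring

theorem stmt6 (f : ℝ → ℝ) (hf : ContinuousOn f (Set.Ici 0))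
    (C : ℝ) (N : ℕ) (hbd : ∀ x ≥ (0:ℝ), |f x| ≤ C * x ^ N) :
    ∃ C' : ℝ, ∀ s ≥ (0:ℝ), |twistedMellin f s| ≤ C' * (1 + s) ^ N :=
  stmt6_general f C N hbd
end

section
/- For the Todd function f(x) = x/(1 − e^{-x}) and s > 0, the twisted Mellin transform is Mf(s) = (s+1) ζ(s+2). -/
/-! Since `x / (1 - e^{-x}) · x^s e^{-x} = x^{s+1} / (e^x - 1)`, the integral in `Mf(s)` is the
Mellin transform of `1 / (e^t - 1)` at `s + 2`. Expanding `1 / (e^t - 1) = ∑_{n ≥ 1} e^{-n t}` and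
integrating termwise gives the classical `Γ(s + 2) ζ(s + 2)`, and `Γ(s + 2) = (s + 1) Γ(s + 1)`. -/

open MeasureTheory Set Real

lemma hasSum_exp_neg_nat_succ_mul {t : ℝ} (ht : 0 < t) :
    HasSum (fun n : ℕ => rexp (-(n + 1) * t)) (1 / (rexp t - 1)) := by
  have hr : rexp (-t) < 1 := exp_lt_one_iff.mpr (neg_lt_zero.mpr ht)
  have hne : rexp t - 1 ≠ 0 := sub_ne_zero.mpr (one_lt_exp_iff.mpr ht).ne'
  have hterm : (fun n : ℕ => rexp (-(n + 1) * t)) = fun n => rexp (-t) * rexp (-t) ^ n := by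
    funext n
    rw [← exp_nat_mul, ← exp_add]
    ring_nf
  have hval : 1 / (rexp t - 1) = rexp (-t) * (1 - rexp (-t))⁻¹ := by
    rw [exp_neg]
    field_simp
  rw [hterm, hval]
  exact (hasSum_geometric_of_lt_one (exp_nonneg _) hr).mul_left _

theorem mellin_one_div_exp_sub_one {s : ℂ} (hs : 1 < s.re) :
    mellin (fun t : ℝ => ((1 / (rexp t - 1) : ℝ) : ℂ)) s = Complex.Gamma s * riemannZeta s := by
  have hterms : ∀ t ∈ Ioi (0 : ℝ), HasSum (fun n : ℕ => (1 : ℂ) * rexp (-((n : ℝ) + 1) * t))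
      ((1 / (rexp t - 1) : ℝ) : ℂ) := fun t ht => by
    simpa using Complex.hasSum_ofReal.mpr (hasSum_exp_neg_nat_succ_mul ht)
  have hsum : Summable fun n : ℕ => ‖(1 : ℂ)‖ / ((n : ℝ) + 1) ^ s.re := by
    simpa [one_div] using (summable_nat_add_iff 1).mpr (summable_one_div_nat_rpow.mpr hs)
  have hmellin := hasSum_mellin (fun _ => Or.inr (Nat.cast_add_one_pos _)) (zero_lt_one.trans hs)
    hterms hsum
  rw [← hmellin.tsum_eq, zeta_eq_tsum_one_div_nat_add_one_cpow hs, ← tsum_mul_left]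
  congr 1 with n
  push_cast
  ring

lemma integral_todd_mul_rpow_exp_neg (s : ℝ) :
    ((∫ x in Ioi (0 : ℝ), x / (1 - rexp (-x)) * x ^ s * rexp (-x) : ℝ) : ℂ) =
      mellin (fun t : ℝ => ((1 / (rexp t - 1) : ℝ) : ℂ)) (s + 2) := by
  rw [mellin, ← integral_complex_ofReal]
  refine setIntegral_congr_fun measurableSet_Ioi fun t (ht : 0 < t) => ?_
  have hne : rexp t - 1 ≠ 0 := sub_ne_zero.mpr (one_lt_exp_iff.mpr ht).ne'
  rw [show (s : ℂ) + 2 - 1 = ((s + 1 : ℝ) : ℂ) by push_cast; ring, smul_eq_mul,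
    ← Complex.ofReal_cpow ht.le, ← Complex.ofReal_mul, rpow_add ht, rpow_one, exp_neg]
  congr 1
  field_simp

theorem stmt12 (s : ℝ) (hs : 0 < s) :
    (twistedMellin (fun x => x / (1 - Real.exp (-x))) s : ℂ) =
      (s + 1) * riemannZeta (s + 2) := by
  have hs₁ : 0 < ((s : ℂ) + 1).re := by
    simp only [Complex.add_re, Complex.ofReal_re, Complex.one_re]; linarith
  have hs₂ : 1 < ((s : ℂ) + 2).re := by
    simp only [Complex.add_re, Complex.ofReal_re, Complex.re_ofNat]; linarith
  rw [twistedMellin, Complex.ofReal_div, integral_todd_mul_rpow_exp_neg,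
    mellin_one_div_exp_sub_one hs₂, ← Complex.Gamma_ofReal, Complex.ofReal_add, Complex.ofReal_one,
    show (s : ℂ) + 2 = s + 1 + 1 by ring, Complex.Gamma_add_one _ (Complex.ne_zero_of_re_pos hs₁)]
  field_simp [Complex.Gamma_ne_zero_of_re_pos hs₁]
end

section
/- For f(x) = sin x and s ≥ 0, we have Mf(s) = 2^{-(s+1)/2} sin((s+1)π/4); for g(x) = cos x, Mg(s) = 2^{-(s+1)/2} cos((s+1)π/4). -/
/-!
Against the weight `x ^ s * exp (-x) / Γ(s + 1)` the twisted Mellin transform is the expectation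
under the Gamma distribution of shape `s + 1` and rate `1`, so `M sin (s)` and `M cos (s)` are the
imaginary and real parts of `E[exp (i X)]`. For real `t < 1` the Gamma integral gives
`E[exp (t X)] = (1 - t) ^ (-(s + 1))`; both sides are holomorphic in `z` on the half-plane
`Re z < 1`, so the identity theorem extends this to `z = i`, and
`(1 - i) ^ (-(s + 1)) = 2 ^ (-(s + 1) / 2) * exp (i (s + 1) π / 4)`.
-/

open MeasureTheory Set Real

open ProbabilityTheory Filter Topology
open Complex (I)
open scoped Complex

lemma integral_gammaMeasure {E : Type*} [NormedAddCommGroup E] [NormedSpace ℝ E]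
    {a r : ℝ} (ha : 0 < a) (hr : 0 < r) (g : ℝ → E) :
    ∫ x, g x ∂gammaMeasure a r =
      (r ^ a / Gamma a) • ∫ x in Ioi 0, (x ^ (a - 1) * rexp (-(r * x))) • g x := by
  rw [gammaMeasure, integral_withDensity_eq_integral_toReal_smul (f := gammaPDF a r)
    (measurable_gammaPDFReal a r).ennreal_ofReal
    (ae_of_all _ fun _ ↦ ENNReal.ofReal_lt_top), ← integral_Ici_eq_integral_Ioi,
    ← setIntegral_eq_integral_of_forall_compl_eq_zero, ← integral_smul]
  · refine setIntegral_congr_fun measurableSet_Ici fun x (hx : 0 ≤ x) ↦ ?_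
    rw [gammaPDF_of_nonneg hx, ENNReal.toReal_ofReal (by positivity), smul_smul, mul_assoc]
  · intro x (hx : ¬ 0 ≤ x)
    rw [gammaPDF_of_neg (not_le.mp hx), ENNReal.toReal_zero, zero_smul]

lemma twistedMellin_eq_integral_gammaMeasure {s : ℝ} (hs : -1 < s) (f : ℝ → ℝ) :
    twistedMellin f s = ∫ x, f x ∂gammaMeasure (s + 1) 1 := by
  rw [integral_gammaMeasure (by linarith) one_pos, twistedMellin, one_rpow, add_sub_cancel_right,
    smul_eq_mul, one_div, inv_mul_eq_div]
  congr 2 with x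
  rw [smul_eq_mul, one_mul]
  ring

lemma mgf_gammaMeasure {a r t : ℝ} (ha : 0 < a) (hr : 0 < r) (ht : t < r) :
    mgf id (gammaMeasure a r) t = (1 - t / r) ^ (-a) := by
  have hrt : 0 < r - t := sub_pos.mpr ht
  have hrt' : 0 < 1 - t / r := sub_pos.mpr ((div_lt_one hr).mpr ht)
  have hexp (x : ℝ) : (x ^ (a - 1) * rexp (-(r * x))) • rexp (t * id x) =
      x ^ (a - 1) * rexp (-((r - t) * x)) := by
    rw [smul_eq_mul, id, mul_assoc, ← Real.exp_add]
    ring_nf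
  simp only [mgf, integral_gammaMeasure ha hr, hexp, integral_rpow_mul_exp_neg_mul_Ioi ha hrt,
    smul_eq_mul]
  calc r ^ a / Gamma a * ((1 / (r - t)) ^ a * Gamma a) = (r * (1 / (r - t))) ^ a := by
        rw [Real.mul_rpow hr.le (by positivity)]
        field_simp [(Gamma_pos_of_pos ha).ne']
    _ = (1 - t / r) ^ (-a) := by
        rw [Real.rpow_neg hrt'.le, ← Real.inv_rpow hrt'.le]
        congr 1
        field_simp

lemma Iio_subset_interior_integrableExpSet_gammaMeasure {a r : ℝ} (ha : 0 < a) (hr : 0 < r) :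
    Iio r ⊆ interior (integrableExpSet id (gammaMeasure a r)) := by
  refine interior_maximal (fun t (ht : t < r) ↦ ?_) isOpen_Iio
  have := isProbabilityMeasure_gammaMeasure ha hr
  -- the mgf is junk `0` unless `exp (t * x)` is integrable, and here it is positive
  refine mgf_pos_iff.mp ?_
  rw [mgf_gammaMeasure ha hr ht]
  exact Real.rpow_pos_of_pos (sub_pos.mpr ((div_lt_one hr).mpr ht)) _

lemma complexMGF_gammaMeasure {a r : ℝ} (ha : 0 < a) (hr : 0 < r) {z : ℂ} (hz : z.re < r) :
    complexMGF id (gammaMeasure a r) z = (1 - z / r) ^ (-(a : ℂ)) := by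
  have hU : IsOpen {z : ℂ | z.re < r} := isOpen_lt Complex.continuous_re continuous_const
  have hmgf : AnalyticOnNhd ℂ (complexMGF id (gammaMeasure a r)) {z : ℂ | z.re < r} :=
    analyticOnNhd_complexMGF.mono fun z hz ↦
      Iio_subset_interior_integrableExpSet_gammaMeasure ha hr hz
  have hpow : AnalyticOnNhd ℂ (fun z : ℂ ↦ (1 - z / r) ^ (-(a : ℂ))) {z : ℂ | z.re < r} := by
    refine DifferentiableOn.analyticOnNhd (fun z (hz : z.re < r) ↦ ?_) hU
    refine (DifferentiableAt.cpow_const (by fun_prop) ?_).differentiableWithinAt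
    refine Complex.mem_slitPlane_iff.mpr (Or.inl ?_)
    rw [Complex.sub_re, Complex.one_re, Complex.div_ofReal_re, sub_pos]
    exact (div_lt_one hr).mpr hz
  have hreal (t : ℝ) (ht : t < r) :
      complexMGF id (gammaMeasure a r) t = (1 - (t : ℂ) / r) ^ (-(a : ℂ)) := by
    rw [complexMGF_ofReal, mgf_gammaMeasure ha hr ht, Complex.ofReal_cpow (sub_pos.mpr ((div_lt_one hr).mpr ht)).le]
    norm_cast
  have hfreq : ∃ᶠ z in 𝓝[≠] ((0 : ℝ) : ℂ),
      complexMGF id (gammaMeasure a r) z = (1 - z / r) ^ (-(a : ℂ)) := by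
    have hofReal : Tendsto ((↑) : ℝ → ℂ) (𝓝[≠] 0) (𝓝[≠] ((0 : ℝ) : ℂ)) :=
      Complex.continuous_ofReal.continuousWithinAt.tendsto_nhdsWithin
        fun t ht ↦ Complex.ofReal_injective.ne ht
    exact hofReal.frequently (eventually_nhdsWithin_of_eventually_nhds
      (eventually_lt_nhds hr |>.mono hreal)).frequently
  exact hmgf.eqOn_of_preconnected_of_frequently_eq hpow (convex_halfSpace_re_lt r).isPreconnected
    (by simpa using hr) hfreq hz

lemma integrable_cexp_mul_gammaMeasure {a r : ℝ} (ha : 0 < a) (hr : 0 < r) {z : ℂ}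
    (hz : z.re < r) : Integrable (fun x : ℝ ↦ cexp (z * x)) (gammaMeasure a r) :=
  integrable_cexp_mul_of_re_mem_interior_integrableExpSet (X := id)
    (Iio_subset_interior_integrableExpSet_gammaMeasure ha hr hz)

lemma integral_cos_eq_re_complexMGF {μ : Measure ℝ}
    (h : Integrable (fun x : ℝ ↦ cexp (I * x)) μ) :
    ∫ x, cos x ∂μ = (complexMGF id μ I).re :=
  calc ∫ x, cos x ∂μ = ∫ x, RCLike.re (cexp (I * x)) ∂μ := by
        congr with x
        rw [mul_comm, RCLike.re_to_complex, Complex.exp_ofReal_mul_I_re]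
    _ = (complexMGF id μ I).re := integral_re h

lemma integral_sin_eq_im_complexMGF {μ : Measure ℝ}
    (h : Integrable (fun x : ℝ ↦ cexp (I * x)) μ) :
    ∫ x, sin x ∂μ = (complexMGF id μ I).im :=
  calc ∫ x, sin x ∂μ = ∫ x, RCLike.im (cexp (I * x)) ∂μ := by
        congr with x
        rw [mul_comm, RCLike.im_to_complex, Complex.exp_ofReal_mul_I_im]
    _ = (complexMGF id μ I).im := integral_im h

lemma log_one_sub_I : Complex.log (1 - I) = ⟨Real.log 2 / 2, -(π / 4)⟩ := by
  have hsqrt : rexp (Real.log 2 / 2) = √2 := by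
    rw [← Real.log_sqrt zero_le_two, Real.exp_log (by positivity)]
  have hsq : √2 * (√2 / 2) = 1 := by
    rw [← mul_div_assoc, Real.mul_self_sqrt zero_le_two, div_self two_ne_zero]
  have hexp : cexp ⟨Real.log 2 / 2, -(π / 4)⟩ = 1 - I := by
    apply Complex.ext <;>
      simp [Complex.exp_re, Complex.exp_im, hsqrt, cos_pi_div_four, sin_pi_div_four, hsq]
  rw [← hexp, Complex.log_exp] <;> dsimp only <;> linarith [pi_pos]

lemma one_sub_I_cpow_neg (a : ℝ) :
    (1 - I) ^ (-(a : ℂ)) = ↑((2 : ℝ) ^ (-a / 2)) * cexp (↑(a * π / 4) * I) := by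
  have hexponent : (⟨Real.log 2 / 2, -(π / 4)⟩ : ℂ) * -(a : ℂ) =
      ↑(Real.log 2 * (-a / 2)) + ↑(a * π / 4) * I := by
    apply Complex.ext <;>
      simp only [Complex.mul_re, Complex.mul_im, Complex.neg_re, Complex.neg_im, Complex.add_re,
        Complex.add_im, Complex.ofReal_re, Complex.ofReal_im, Complex.I_re, Complex.I_im] <;>
      ring
  rw [Complex.cpow_def_of_ne_zero (by simp [Complex.ext_iff]), log_one_sub_I, hexponent,
    Complex.exp_add, ← Complex.ofReal_exp, ← Real.rpow_def_of_pos two_pos]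

theorem stmt14 (s : ℝ) (hs : 0 ≤ s) :
    twistedMellin Real.sin s = 2 ^ (-(s + 1) / 2) * Real.sin ((s + 1) * Real.pi / 4) ∧
    twistedMellin Real.cos s = 2 ^ (-(s + 1) / 2) * Real.cos ((s + 1) * Real.pi / 4) := by
  have hs' : -1 < s := by linarith
  have hI : I.re < 1 := by simp
  have hint := integrable_cexp_mul_gammaMeasure (a := s + 1) (by linarith) one_pos hI
  have hcharFun : complexMGF id (gammaMeasure (s + 1) 1) I =
      ↑((2 : ℝ) ^ (-(s + 1) / 2)) * cexp (↑((s + 1) * π / 4) * I) := by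
    rw [complexMGF_gammaMeasure (by linarith) one_pos hI, Complex.ofReal_one, div_one,
      ← one_sub_I_cpow_neg]
  rw [twistedMellin_eq_integral_gammaMeasure hs', twistedMellin_eq_integral_gammaMeasure hs',
    integral_sin_eq_im_complexMGF hint, integral_cos_eq_re_complexMGF hint, hcharFun,
    Complex.im_ofReal_mul, Complex.re_ofReal_mul, Complex.exp_ofReal_mul_I_im,
    Complex.exp_ofReal_mul_I_re]
  exact ⟨rfl, rfl⟩
end

section
/- The functions f_r(s) = (∫₀^∞ (x−s)^r x^s e^{-x} dx)/Γ(s+1) satisfy the recurrence f_r(s) = r f_{r-1}(s) + (r−1) s f_{r-2}(s) for all r ≥ 2 and s ≥ 0, with f_0(s) = f_1(s) = 1. -/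
open MeasureTheory Set Real

noncomputable def fr (r : ℕ) (s : ℝ) : ℝ :=
  (∫ x in Set.Ioi (0:ℝ), (x - s) ^ r * x ^ s * Real.exp (-x)) / Real.Gamma (s + 1)

/-!
Since `d/dx (x ^ (s + 1) e⁻ˣ) = -(x - s) x ^ s e⁻ˣ`, writing `x = (x - s) + s` shows that the
derivative of `(x - s) ^ (k + 1) x ^ (s + 1) e⁻ˣ` is `((k + 2) (x - s) ^ (k + 1) + (k + 1) s (x - s) ^ k
- (x - s) ^ (k + 2)) x ^ s e⁻ˣ`. That function vanishes at `0` (because `s + 1 > 0`) and at `∞`, so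
the integral of its derivative over `(0, ∞)` is zero, which is the recurrence after dividing by
`Γ(s + 1)`. The initial values are `∫ x ^ s e⁻ˣ = Γ(s + 1)` and `Γ(s + 2) - s Γ(s + 1) = Γ(s + 1)`.
-/

open Filter Topology

lemma integrableOn_rpow_mul_exp_neg {a : ℝ} (ha : -1 < a) :
    IntegrableOn (fun x : ℝ => x ^ a * exp (-x)) (Ioi 0) := by
  refine (GammaIntegral_convergent (s := a + 1) (by linarith)).congr_fun (fun x _ => ?_)
    measurableSet_Ioi
  rw [add_sub_cancel_right, mul_comm]

lemma integral_rpow_mul_exp_neg {a : ℝ} (ha : -1 < a) :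
    ∫ x in Ioi 0, x ^ a * exp (-x) = Gamma (a + 1) := by
  rw [Gamma_eq_integral (by linarith)]
  refine setIntegral_congr_fun measurableSet_Ioi (fun x _ => ?_)
  rw [add_sub_cancel_right, mul_comm]

lemma integrableOn_sub_pow_mul_rpow_mul_exp_neg (c : ℝ) (r : ℕ) {a : ℝ} (ha : -1 < a) :
    IntegrableOn (fun x : ℝ => (x - c) ^ r * x ^ a * exp (-x)) (Ioi 0) := by
  induction r generalizing a with
  | zero => simpa using integrableOn_rpow_mul_exp_neg ha
  | succ r ih =>
    refine ((ih (a := a + 1) (by linarith)).sub ((ih ha).const_mul c)).congr_fun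
      (fun x (hx : 0 < x) => ?_) measurableSet_Ioi
    dsimp only [Pi.sub_apply]
    rw [rpow_add_one hx.ne']
    ring

lemma tendsto_sub_pow_mul_rpow_mul_exp_neg_atTop (c a : ℝ) (n : ℕ) :
    Tendsto (fun x : ℝ => (x - c) ^ n * x ^ a * exp (-x)) atTop (𝓝 0) := by
  have hlim := (tendsto_rpow_mul_exp_neg_mul_atTop_nhds_zero (n + a) 1 one_pos).const_mul (2 ^ n)
  rw [mul_zero] at hlim
  refine squeeze_zero_norm' ?_ hlim
  filter_upwards [eventually_ge_atTop (max |c| 1)] with x hx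
  have hx0 : 0 < x := by linarith [le_max_right |c| 1]
  have hxc : |x - c| ≤ 2 * x := by
    have := le_max_left |c| 1
    rw [abs_le] at *
    constructor <;> linarith
  calc ‖(x - c) ^ n * x ^ a * exp (-x)‖ = |x - c| ^ n * (x ^ a * exp (-x)) := by
        rw [Real.norm_eq_abs, mul_assoc, abs_mul, abs_pow,
          abs_of_pos (by positivity : 0 < x ^ a * exp (-x))]
    _ ≤ (2 * x) ^ n * (x ^ a * exp (-x)) := by gcongr
    _ = 2 ^ n * (x ^ ((n : ℝ) + a) * exp (-1 * x)) := by
        rw [rpow_add hx0, rpow_natCast]; ring_nf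

section Recurrence

variable {s : ℝ}

lemma hasDerivAt_sub_pow_mul_rpow_mul_exp_neg (k : ℕ) {x : ℝ} (hx : 0 < x) :
    HasDerivAt (fun x : ℝ => (x - s) ^ (k + 1) * x ^ (s + 1) * exp (-x))
      ((k + 2) * ((x - s) ^ (k + 1) * x ^ s * exp (-x))
        + (k + 1) * s * ((x - s) ^ k * x ^ s * exp (-x))
        - (x - s) ^ (k + 2) * x ^ s * exp (-x)) x := by
  have hpow : HasDerivAt (fun x : ℝ => (x - s) ^ (k + 1)) ((k + 1) * (x - s) ^ k) x := by
    simpa using ((hasDerivAt_id x).sub_const s).fun_pow (k + 1)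
  have hrpow : HasDerivAt (fun x : ℝ => x ^ (s + 1)) ((s + 1) * x ^ s) x := by
    simpa using hasDerivAt_rpow_const (p := s + 1) (Or.inl hx.ne')
  have hexp : HasDerivAt (fun x : ℝ => exp (-x)) (-exp (-x)) x := by
    simpa using (hasDerivAt_neg x).exp
  refine ((hpow.fun_mul hrpow).fun_mul hexp).congr_deriv ?_
  rw [rpow_add_one hx.ne']
  ring

lemma integral_sub_pow_add_two_mul_rpow_mul_exp_neg (hs : -1 < s) (k : ℕ) :
    ∫ x in Ioi 0, (x - s) ^ (k + 2) * x ^ s * exp (-x) =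
      (k + 2) * (∫ x in Ioi 0, (x - s) ^ (k + 1) * x ^ s * exp (-x))
        + (k + 1) * s * ∫ x in Ioi 0, (x - s) ^ k * x ^ s * exp (-x) := by
  have hint := fun j => integrableOn_sub_pow_mul_rpow_mul_exp_neg s j hs
  have hcont : ContinuousWithinAt (fun x : ℝ => (x - s) ^ (k + 1) * x ^ (s + 1) * exp (-x))
      (Ici 0) 0 := by
    refine ContinuousAt.continuousWithinAt ?_
    have := continuousAt_rpow_const 0 (s + 1) (Or.inr (by linarith))
    fun_prop
  have hA := (hint (k + 1)).const_mul ((k : ℝ) + 2)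
  have hB := (hint k).const_mul (((k : ℝ) + 1) * s)
  have hFTC := integral_Ioi_of_hasDerivAt_of_tendsto hcont
    (fun x hx => hasDerivAt_sub_pow_mul_rpow_mul_exp_neg k hx) ((hA.fun_add hB).sub (hint (k + 2)))
    (tendsto_sub_pow_mul_rpow_mul_exp_neg_atTop s (s + 1) (k + 1))
  rw [integral_sub (hA.fun_add hB) (hint (k + 2)), integral_add hA hB, integral_const_mul,
    integral_const_mul, zero_rpow (by linarith)] at hFTC
  simp only [mul_zero, zero_mul, sub_zero] at hFTC
  linarith

lemma fr_zero (hs : -1 < s) : fr 0 s = 1 := by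
  simp only [fr, pow_zero, one_mul, integral_rpow_mul_exp_neg hs]
  exact div_self (Gamma_pos_of_pos (by linarith)).ne'

lemma fr_one (hs : -1 < s) : fr 1 s = 1 := by
  have hsplit : ∫ x in Ioi 0, (x - s) ^ 1 * x ^ s * exp (-x)
      = ∫ x in Ioi 0, (x ^ (s + 1) * exp (-x) - s * (x ^ s * exp (-x))) :=
    setIntegral_congr_fun measurableSet_Ioi fun x (hx : 0 < x) => by
      rw [rpow_add_one hx.ne']; ring
  have hΓ : Gamma (s + 1) ≠ 0 := (Gamma_pos_of_pos (by linarith)).ne'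
  rw [fr, hsplit, integral_sub (integrableOn_rpow_mul_exp_neg (by linarith))
      ((integrableOn_rpow_mul_exp_neg hs).const_mul s), integral_const_mul,
    integral_rpow_mul_exp_neg hs, integral_rpow_mul_exp_neg (by linarith),
    Gamma_add_one (by linarith)]
  field_simp
  ring

lemma fr_add_two (hs : -1 < s) (k : ℕ) :
    fr (k + 2) s = (k + 2) * fr (k + 1) s + (k + 1) * s * fr k s := by
  rw [fr, fr, fr, integral_sub_pow_add_two_mul_rpow_mul_exp_neg hs]
  ring

end Recurrence

theorem stmt16 (s : ℝ) (hs : 0 ≤ s) :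
    fr 0 s = 1 ∧ fr 1 s = 1 ∧
    ∀ r : ℕ, 2 ≤ r → fr r s = r * fr (r - 1) s + (r - 1) * s * fr (r - 2) s := by
  have hs' : -1 < s := by linarith
  refine ⟨fr_zero hs', fr_one hs', fun r hr => ?_⟩
  obtain ⟨k, rfl⟩ := Nat.exists_eq_add_of_le' hr
  rw [Nat.add_sub_cancel, show k + 2 - 1 = k + 1 by omega, fr_add_two hs' k]
  push_cast
  ring
end

section
/- For each r ≥ 0, the function f_r(s) = Σ_{i=0}^r (−1)^{r-i} C(r,i) (s+1)(s+2)⋯(s+i) s^{r-i} is a polynomial in s of degree at most ⌊r/2⌋, with f_r(0) = r! and, for r = 2k even, leading coefficient (2k−1)!!. -/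
open Finset

noncomputable def frPoly (r : ℕ) (s : ℝ) : ℝ :=
  ∑ i ∈ Finset.range (r + 1),
    (-1 : ℝ) ^ (r - i) * (r.choose i) *
      (∏ j ∈ Finset.range i, (s + (j + 1))) * s ^ (r - i)

/-!
Write `a i = (s + 1) ⋯ (s + i)`, so that `f_r(s) = ∑ C(r,i) a_i (-s)^(r-i)` is the umbral power
`(a - s)^r`. Pascal's rule and absorption (`i C(r,i) = r C(r-1,i-1)`), combined with
`a (i + 1) = (s + 1 + i) a i`, give the three-term recurrence
`f_(r+2) = (r + 2) f_(r+1) + (r + 1) s f_r` with `f_0 = f_1 = 1`. So `f_r` is the polynomial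
defined by this recurrence: its degree grows by one every two steps, and the coefficient of `s^k`
in `f_(2k)` only picks up the factor `2k + 1` from the term `(2k + 1) s f_(2k)`.
Finally `f_r(0) = a_r(0) = r!`.
-/

open Polynomial

section binomSum

variable {R : Type*} [CommSemiring R]

def binomSum (a : ℕ → R) (t : R) (n : ℕ) : R :=
  ∑ i ∈ range (n + 1), (n.choose i : R) * (a i * t ^ (n - i))

theorem binomSum_succ (a : ℕ → R) (t : R) (n : ℕ) :
    binomSum a t (n + 1) = t * binomSum a t n + binomSum (fun i ↦ a (i + 1)) t n := by
  rw [binomSum, sum_choose_succ_mul (fun i j ↦ a i * t ^ j), binomSum, mul_sum]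
  congr 1
  refine sum_congr rfl fun i hi ↦ ?_
  rw [Nat.sub_add_comm (mem_range_succ_iff.mp hi), pow_succ]
  ring

theorem binomSum_natCast_mul_succ (a : ℕ → R) (t : R) (n : ℕ) :
    binomSum (fun i ↦ i * a i) t (n + 1) = (n + 1) * binomSum (fun i ↦ a (i + 1)) t n := by
  rw [binomSum, sum_range_succ', binomSum, mul_sum]
  simp only [Nat.cast_zero, zero_mul, mul_zero, add_zero, Nat.add_sub_add_right]
  refine sum_congr rfl fun i _ ↦ ?_
  have h := congrArg (Nat.cast (R := R)) (Nat.add_one_mul_choose_eq n i)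
  push_cast at h ⊢
  rw [← mul_assoc (n + 1 : R), h]
  ring

end binomSum

theorem binomSum_add_two_of_rising {R : Type*} [CommRing R] {a : ℕ → R} {c : R}
    (ha : ∀ i, a (i + 1) = (c + i) * a i) (t : R) (n : ℕ) :
    binomSum a t (n + 2) =
      (c + t + n + 1) * binomSum a t (n + 1) - (n + 1) * t * binomSum a t n := by
  have hshift : ∀ m, binomSum (fun i ↦ a (i + 1)) t m =
      c * binomSum a t m + binomSum (fun i ↦ i * a i) t m := by
    intro m
    simp only [binomSum, ha, mul_sum, ← sum_add_distrib]
    exact sum_congr rfl fun i _ ↦ by ring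
  have h1 := binomSum_succ a t n
  have h2 := binomSum_succ a t (n + 1)
  have h3 := binomSum_natCast_mul_succ a t n
  rw [hshift] at h1 h2 h3
  linear_combination h2 + h3 - (n + 1) * h1

theorem frPoly_eq_binomSum (r : ℕ) (s : ℝ) :
    frPoly r s = binomSum (fun i ↦ ∏ j ∈ range i, (s + (j + 1))) (-s) r := by
  refine sum_congr rfl fun i _ ↦ ?_
  rw [neg_pow]
  ring

theorem frPoly_add_two (r : ℕ) (s : ℝ) :
    frPoly (r + 2) s = (r + 2) * frPoly (r + 1) s + (r + 1) * s * frPoly r s := by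
  have h := binomSum_add_two_of_rising
    (a := fun i ↦ ∏ j ∈ range i, (s + (j + 1))) (c := s + 1)
    (fun i ↦ by simp only [prod_range_succ]; ring) (-s) r
  rw [frPoly_eq_binomSum, frPoly_eq_binomSum, frPoly_eq_binomSum, h]
  ring

theorem frPoly_apply_zero (r : ℕ) : frPoly r 0 = r.factorial := by
  rw [frPoly, sum_eq_single_of_mem r (self_mem_range_succ r)]
  · simp [← prod_range_add_one_eq_factorial]
  · intro i hi hir
    have : 0 < r - i := Nat.sub_pos_of_lt (lt_of_le_of_ne (mem_range_succ_iff.mp hi) hir)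
    simp [zero_pow this.ne']

section frPolynomial

variable (R : Type*) [Semiring R]

noncomputable def frPolynomial : ℕ → R[X]
  | 0 => 1
  | 1 => 1
  | r + 2 => (r + 2) • frPolynomial (r + 1) + (r + 1) • (X * frPolynomial r)

theorem natDegree_frPolynomial_le : ∀ r, (frPolynomial R r).natDegree ≤ r / 2
  | 0 => by simp [frPolynomial]
  | 1 => by simp [frPolynomial]
  | r + 2 => by
    have h1 := (natDegree_smul_le (r + 2) _).trans (natDegree_frPolynomial_le (r + 1))
    have h2 := (natDegree_smul_le (r + 1) _).trans
      (natDegree_mul_le.trans (add_le_add natDegree_X_le (natDegree_frPolynomial_le r)))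
    rw [frPolynomial]
    refine (natDegree_add_le _ _).trans (max_le (h1.trans ?_) (h2.trans ?_)) <;> omega

theorem coeff_frPolynomial_two_mul (k : ℕ) :
    (frPolynomial R (2 * k)).coeff k = (2 * k - 1).doubleFactorial := by
  induction k with
  | zero => simp [frPolynomial]
  | succ k ih =>
    have hvanish : (frPolynomial R (2 * k + 1)).coeff (k + 1) = 0 :=
      coeff_eq_zero_of_natDegree_lt ((natDegree_frPolynomial_le R _).trans_lt (by omega))
    rw [show 2 * (k + 1) = 2 * k + 2 by ring, frPolynomial, coeff_add, coeff_smul, coeff_smul,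
      coeff_X_mul, hvanish, ih, show 2 * k + 2 - 1 = 2 * k + 1 by omega,
      Nat.doubleFactorial_add_one]
    simp [nsmul_eq_mul]

end frPolynomial

theorem eval_frPolynomial : ∀ (r : ℕ) (s : ℝ), (frPolynomial ℝ r).eval s = frPoly r s
  | 0, s => by simp [frPolynomial, frPoly]
  | 1, s => by simp [frPolynomial, frPoly, sum_range_succ]
  | r + 2, s => by
    simp only [frPolynomial, eval_add, eval_smul, eval_mul, eval_X, eval_frPolynomial (r + 1) s,
      eval_frPolynomial r s, frPoly_add_two]
    simp only [nsmul_eq_mul]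
    push_cast
    ring

theorem stmt17 (r : ℕ) :
    ∃ p : Polynomial ℝ,
      p.natDegree ≤ r / 2 ∧
      (∀ s : ℝ, p.eval s = frPoly r s) ∧
      frPoly r 0 = r.factorial ∧
      (∀ k : ℕ, r = 2 * k → p.coeff k = Nat.doubleFactorial (2 * k - 1)) := by
  refine ⟨frPolynomial ℝ r, natDegree_frPolynomial_le ℝ r, eval_frPolynomial r,
    frPoly_apply_zero r, ?_⟩
  rintro k rfl
  exact coeff_frPolynomial_two_mul ℝ k
end

section
/- The exponential generating function of the polynomials f_r(s) is Σ_{r=0}^∞ f_r(s) x^r/r! = e^{-sx}/(1−x)^{1+s}, valid for |x| < 1. -/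
/-!
Writing `(1 - x)^{-(1+s)} = Σ_i ((s+1)⋯(s+i)/i!) xⁱ` (the binomial series, whose coefficients
are the rising factorials of `1 + s` over `i!`) and `e^{-sx} = Σ_k (-s)ᵏ xᵏ / k!`, the `r`-th
coefficient of the Cauchy product of the two absolutely convergent series is exactly
`f_r(s) / r!`, the binomial coefficient `C(r, i)` arising from `r! / (i! (r - i)!)`.
-/

open Finset Real

open scoped Nat

theorem Ring.multichoose_mul_factorial {R : Type*} [CommRing R] [BinomialRing R] (a : R) (n : ℕ) :
    Ring.multichoose a n * n ! = ∏ j ∈ range n, (a + j) := by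
  rw [mul_comm, ← nsmul_eq_mul, Ring.factorial_nsmul_multichoose_eq_ascPochhammer,
    Polynomial.ascPochhammer_smeval_eq_eval]
  induction n with
  | zero => simp
  | succ n ih => rw [ascPochhammer_succ_eval, ih, prod_range_succ]

theorem mem_eball_one_of_abs_lt_one {x : ℝ} (hx : |x| < 1) : x ∈ Metric.eball (0 : ℝ) 1 := by
  simpa [enorm_eq_nnnorm, ← NNReal.coe_lt_one] using hx

theorem hasSum_multichoose_mul_pow (a : ℝ) {x : ℝ} (hx : |x| < 1) :
    HasSum (fun n ↦ Ring.multichoose a n * x ^ n) (1 / (1 - x) ^ a) := by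
  simpa [Ring.multichoose_eq, mul_comm] using
    (one_div_one_sub_rpow_hasFPowerSeriesOnBall_zero a).hasSum (mem_eball_one_of_abs_lt_one hx)

theorem summable_norm_multichoose_mul_pow (a : ℝ) {x : ℝ} (hx : |x| < 1) :
    Summable fun n ↦ ‖Ring.multichoose a n * x ^ n‖ := by
  have hp := one_div_one_sub_rpow_hasFPowerSeriesOnBall_zero a
  simpa [Ring.multichoose_eq, mul_comm] using FormalMultilinearSeries.summable_norm_apply _
    (Metric.eball_subset_eball hp.r_le (mem_eball_one_of_abs_lt_one hx))

theorem frPoly_mul_pow_div_factorial (r : ℕ) (s x : ℝ) :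
    frPoly r s * x ^ r / r ! =
      ∑ i ∈ range (r + 1),
        Ring.multichoose (1 + s) i * x ^ i * ((-s * x) ^ (r - i) / (r - i)!) := by
  rw [frPoly, sum_mul, sum_div]
  refine sum_congr rfl fun i hi ↦ ?_
  have hir : i ≤ r := Nat.lt_succ_iff.1 (mem_range.1 hi)
  have hchoose : (r.choose i : ℝ) * i ! * (r - i)! = r ! := by
    exact_mod_cast Nat.choose_mul_factorial_mul_factorial hir
  have hchoose_ne : (r.choose i : ℝ) ≠ 0 := by exact_mod_cast (Nat.choose_pos hir).ne'
  have hmulti : Ring.multichoose (1 + s) i * i ! = ∏ j ∈ range i, (s + (j + 1)) := by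
    rw [Ring.multichoose_mul_factorial]
    exact prod_congr rfl fun j _ ↦ by ring
  have hpow : x ^ r = x ^ i * x ^ (r - i) := by rw [← pow_add, Nat.add_sub_cancel' hir]
  rw [← hmulti, ← hchoose, hpow, mul_pow, neg_pow s]
  field_simp

theorem stmt18 (s x : ℝ) (hx : |x| < 1) :
    HasSum (fun r : ℕ => frPoly r s * x ^ r / r.factorial)
      (Real.exp (-s * x) / (1 - x) ^ (1 + s)) := by
  have hexp : HasSum (fun n ↦ (-s * x) ^ n / n !) (Real.exp (-s * x)) := by
    rw [Real.exp_eq_exp_ℝ]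
    exact NormedSpace.expSeries_div_hasSum_exp _
  have hcauchy := hasSum_sum_range_mul_of_summable_norm
    (summable_norm_multichoose_mul_pow (1 + s) hx)
    (NormedSpace.norm_expSeries_div_summable (-s * x))
  rw [(hasSum_multichoose_mul_pow (1 + s) hx).tsum_eq, hexp.tsum_eq] at hcauchy
  simp_rw [frPoly_mul_pow_div_factorial]
  rw [div_eq_mul_one_div, mul_comm (rexp _)]
  exact hcauchy
end
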